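/- arXiv:2305.12547 — 2 statements merged into one kernel-verified Lean document; each statement's English description precedes it below -/
import Mathlib

section
/- Let p, q ∈ ℝ with q < 0 and suppose the depressed cubic X³ + pX + q = 0 has nonnegative discriminant, i.e. 4p³ + 27q² ≤ 0. Then p < 0, and the largest real root of the cubic lies in the interval [A/2, A], where A = 2√(|p|/3). -/
theorem stmt_13 (p q : ℝ) (hq : q < 0) (hΔ : 4 * p ^ 3 + 27 * q ^ 2 ≤ 0) :
    p < 0 ∧
    (∀ x : ℝ, x ^ 3 + p * x + q = 0 → x ≤ 2 * Real.sqrt (-p / 3)) ∧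
    (∃ x : ℝ, x ^ 3 + p * x + q = 0 ∧ Real.sqrt (-p / 3) ≤ x) := by
  have hq2 : 0 < q ^ 2 := by rw [sq]; exact mul_pos_of_neg_of_neg hq hq
  have hp : p < 0 := by nlinarith [sq_nonneg p]
  set s := Real.sqrt (-p / 3) with hs_def
  have hs : 0 < s := Real.sqrt_pos.2 (by linarith)
  have hs2 : s ^ 2 = -p / 3 := Real.sq_sqrt (by linarith)
  have hp_eq : p = -3 * s ^ 2 := by linarith
  have hs3 : 0 < s ^ 3 := by positivity
  have hp3 : p ^ 3 = -27 * s ^ 6 := by rw [hp_eq]; ring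
  have hq4 : q ^ 2 ≤ 4 * s ^ 6 := by nlinarith
  have hqge : -2 * s ^ 3 ≤ q := by
    by_contra h
    push_neg at h
    nlinarith [mul_pos (by nlinarith : (0:ℝ) < -q - 2 * s ^ 3) (by nlinarith : (0:ℝ) < -q + 2 * s ^ 3)]
  refine ⟨hp, ?_, ?_⟩
  · intro x hx
    by_contra h
    push_neg at h
    have hx2s : 0 < x - 2 * s := by linarith
    have hxs : 0 < (x + s) ^ 2 := pow_pos (by linarith) 2
    nlinarith [mul_pos hx2s hxs]
  · have hcont : ContinuousOn (fun x : ℝ => x ^ 3 + p * x + q) (Set.Icc s (2 * s)) := by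
      fun_prop
    have h1 : (s : ℝ) ^ 3 + p * s + q ≤ 0 := by nlinarith
    have h2 : 0 ≤ (2 * s) ^ 3 + p * (2 * s) + q := by nlinarith
    have := intermediate_value_Icc (by linarith : s ≤ 2 * s) hcont
    have hmem : (0 : ℝ) ∈ Set.Icc (s ^ 3 + p * s + q) ((2 * s) ^ 3 + p * (2 * s) + q) :=
      ⟨h1, h2⟩
    obtain ⟨x, hxI, hxeq⟩ := this hmem
    exact ⟨x, hxeq, hxI.1⟩
end

section
/- Let φ : I → M be a smooth curve in a Riemannian manifold (M,G) with Levi-Civita connection ∇, satisfying the cosmological equation ∇ₜφ̇ + H(φ̇)·φ̇ + grad Φ(φ) = 0, where H(u) = (1/M₀)·(‖u‖² + 2Φ(π(u)))^{1/2}. Define E(t) = ½‖φ̇(t)‖² + Φ(φ(t)). Then dE/dt = −(√(2E(t))/M₀)·‖φ̇(t)‖². In particular E is non-increasing, and strictly decreasing wherever φ̇ ≠ 0. -/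
/-- Cosmological dissipation equation (Euclidean target space): for a solution `φ` of the
cosmological equation, the energy `E(t) = ½‖φ̇(t)‖² + Φ(φ(t))` satisfies
`E'(t) = −(√(2E(t))/M₀)·‖φ̇(t)‖²`; in particular `E` is non-increasing and strictly
decreasing wherever `φ̇ ≠ 0`. -/
theorem stmt_14 {n : ℕ} (M₀ : ℝ) (hM : 0 < M₀)
    (Φ : EuclideanSpace ℝ (Fin n) → ℝ) (hΦpos : ∀ x, 0 < Φ x) (hΦ : ContDiff ℝ (⊤ : ℕ∞) Φ)
    (φ : ℝ → EuclideanSpace ℝ (Fin n)) (hφ : ContDiff ℝ (⊤ : ℕ∞) φ)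
    (heq : ∀ t : ℝ, deriv (deriv φ) t
      + ((1 / M₀) * Real.sqrt (‖deriv φ t‖ ^ 2 + 2 * Φ (φ t))) • deriv φ t
      + gradient Φ (φ t) = 0)
    (E : ℝ → ℝ) (hE : E = fun t => (1 / 2) * ‖deriv φ t‖ ^ 2 + Φ (φ t)) :
    (∀ t : ℝ, HasDerivAt E (-(Real.sqrt (2 * E t) / M₀) * ‖deriv φ t‖ ^ 2) t) ∧
    Antitone E ∧ (∀ t : ℝ, deriv φ t ≠ 0 → deriv E t < 0) := by
  have hphiI : ContDiff ℝ (⊤ : ℕ∞) φ := hφ.of_le (by simp)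
  have hφ' : ContDiff ℝ (⊤ : ℕ∞) (deriv φ) := (contDiff_infty_iff_deriv.mp hphiI).2
  have key : ∀ t : ℝ, HasDerivAt E (-(Real.sqrt (2 * E t) / M₀) * ‖deriv φ t‖ ^ 2) t := by
    intro t
    set v := deriv φ with hv
    have hv1 : HasDerivAt φ (v t) t := (hphiI.differentiable (by simp) t).hasDerivAt
    have hv2 : HasDerivAt v (deriv v t) t := (hφ'.differentiable (by simp) t).hasDerivAt
    set c : ℝ := (1 / M₀) * Real.sqrt (‖v t‖ ^ 2 + 2 * Φ (φ t)) with hc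
    have hg : HasGradientAt Φ (gradient Φ (φ t)) (φ t) :=
      ((hΦ.of_le (by simp) : ContDiff ℝ (⊤:ℕ∞) Φ).differentiable (by simp) (φ t)).hasGradientAt
    have hΦφ : HasDerivAt (fun s => Φ (φ s))
        (inner ℝ (gradient Φ (φ t)) (v t) : ℝ) t := by
      have := hg.hasFDerivAt.comp_hasDerivAt t hv1
      simp at this ⊢; exact this
    have hN : HasDerivAt (fun s => (1/2 : ℝ) * ‖v s‖ ^ 2)
        ((1/2 : ℝ) * ((inner ℝ (v t) (deriv v t) : ℝ) + (inner ℝ (deriv v t) (v t) : ℝ))) t := by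
      have h := (HasDerivAt.inner ℝ hv2 hv2).const_mul (1/2 : ℝ)
      simp only [real_inner_self_eq_norm_sq] at h; exact h
    have hsum := hN.add hΦφ
    have hE' : HasDerivAt E ((1/2 : ℝ) * ((inner ℝ (v t) (deriv v t) : ℝ)
        + (inner ℝ (deriv v t) (v t) : ℝ)) + (inner ℝ (gradient Φ (φ t)) (v t) : ℝ)) t := by
      rw [hE]; exact hsum
    have hdd : deriv v t = -(c • v t) - gradient Φ (φ t) := by
      have h := heq t
      rw [← hc] at h
      linear_combination (norm := module) h
    have hval : (1/2 : ℝ) * ((inner ℝ (v t) (deriv v t) : ℝ)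
        + (inner ℝ (deriv v t) (v t) : ℝ)) + (inner ℝ (gradient Φ (φ t)) (v t) : ℝ)
        = -(Real.sqrt (2 * E t) / M₀) * ‖v t‖ ^ 2 := by
      rw [hdd]
      have h1 : (inner ℝ (v t) (-(c • v t) - gradient Φ (φ t)) : ℝ)
          = -c * ‖v t‖^2 - (inner ℝ (gradient Φ (φ t)) (v t) : ℝ) := by
        rw [inner_sub_right, inner_neg_right, real_inner_smul_right,
          real_inner_self_eq_norm_sq, real_inner_comm]
        ring
      have h2 : (inner ℝ (-(c • v t) - gradient Φ (φ t)) (v t) : ℝ)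
          = -c * ‖v t‖^2 - (inner ℝ (gradient Φ (φ t)) (v t) : ℝ) := by
        rw [inner_sub_left, inner_neg_left, real_inner_smul_left,
          real_inner_self_eq_norm_sq]
        ring
      rw [h1, h2]
      have h2E : 2 * E t = ‖v t‖ ^ 2 + 2 * Φ (φ t) := by
        rw [hE]; ring
      rw [hc, h2E]
      ring
    rw [← hval]; exact hE'
  refine ⟨key, ?_, ?_⟩
  · have hEpos : ∀ t, 0 ≤ E t := by
      intro t
      rw [hE]
      have := (hΦpos (φ t)).le
      positivity
    apply antitone_of_deriv_nonpos
    · exact fun t => (key t).differentiableAt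
    · intro t
      rw [(key t).deriv]
      have h1 : 0 ≤ Real.sqrt (2 * E t) := Real.sqrt_nonneg _
      have : 0 ≤ Real.sqrt (2 * E t) / M₀ := div_nonneg h1 hM.le
      nlinarith [sq_nonneg ‖deriv φ t‖]
  · intro t ht
    rw [(key t).deriv]
    have hEt : 0 < E t := by
      rw [hE]
      have h3 := hΦpos (φ t)
      have : (0:ℝ) ≤ (1/2) * ‖deriv φ t‖ ^ 2 := by positivity
      simpa using by linarith
    have h1 : 0 < Real.sqrt (2 * E t) := Real.sqrt_pos.mpr (by linarith)
    have h2 : 0 < ‖deriv φ t‖ ^ 2 := pow_pos (norm_pos_iff.mpr ht) 2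
    have : 0 < Real.sqrt (2 * E t) / M₀ := div_pos h1 hM
    nlinarith
end
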